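/- arXiv:2412.14043 — 6 statements merged into one kernel-verified Lean document; each statement's English description precedes it below -/
import Mathlib

section
/- Let h, g ∈ ℂ[x₁,…,xₙ] and F : ℂⁿ → ℂⁿ be a polynomial map. Define F₀ : ℂⁿ⁺¹ → ℂⁿ⁺¹ by F₀(x, z) = (F(x), z·h(x)), and let X = {(x,z) ∈ ℂⁿ⁺¹ | z·g(x) = 0}. Fix a ∈ ℂⁿ, set a₀ = a and a_{l+1} = F(a_l). Then g is a polynomial invariant of the loop with guard h ≠ 0 (i.e., g(a_l) = 0 for all l with 0 < l and h(a_0)⋯h(a_{l-1}) ≠ 0, and g(a_0)=0) if and only if (a, 1) ∈ S_{(F₀, X)}, i.e. F₀^[l](a,1) ∈ X for all l ≥ 0. -/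
open MvPolynomial

/-- `g` is a polynomial invariant of the loop `L(a, h, F)` with guard `h ≠ 0`
iff `(a,1)` lies in the invariant set of `(F₀, X)` where `F₀(x,z) = (F(x), z·h(x))`
and `X = V(z·g)`. -/
theorem invariant_iff_mem_invariant_set {n : ℕ}
    (fF : Fin n → MvPolynomial (Fin n) ℂ) (h g : MvPolynomial (Fin n) ℂ)
    (a : Fin n → ℂ) :
    let F : (Fin n → ℂ) → (Fin n → ℂ) := fun x i => eval x (fF i)
    let F₀ : (Fin n → ℂ) × ℂ → (Fin n → ℂ) × ℂ :=
      fun p => (F p.1, p.2 * eval p.1 h)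
    let X : Set ((Fin n → ℂ) × ℂ) := {p | p.2 * eval p.1 g = 0}
    (eval a g = 0 ∧ ∀ l : ℕ, 0 < l →
        (∏ j ∈ Finset.range l, eval (F^[j] a) h) ≠ 0 → eval (F^[l] a) g = 0)
      ↔ ∀ l : ℕ, F₀^[l] (a, 1) ∈ X := by
  intro F F₀ X
  have key : ∀ l : ℕ, F₀^[l] (a, 1) =
      (F^[l] a, ∏ j ∈ Finset.range l, eval (F^[j] a) h) := by
    intro l
    induction l with
    | zero => simp
    | succ l ih =>
      rw [Function.iterate_succ_apply', ih, Function.iterate_succ_apply',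
        Finset.prod_range_succ]
  constructor
  · rintro ⟨h0, hl⟩ l
    rw [key]
    simp only [X, Set.mem_setOf_eq]
    rcases Nat.eq_zero_or_pos l with rfl | hpos
    · simpa using h0
    · by_cases hp : (∏ j ∈ Finset.range l, eval (F^[j] a) h) = 0
      · rw [hp, zero_mul]
      · rw [hl l hpos hp, mul_zero]
  · intro hX
    constructor
    · have := hX 0
      simpa [X] using this
    · intro l hpos hp
      have := hX l
      rw [key] at this
      simp only [X, Set.mem_setOf_eq] at this
      exact (mul_eq_zero.mp this).resolve_left hp
end

section
/- Let f, g, P be polynomials in ℂ[x₁,…,xₙ] with P ≠ 0, and let F : ℂⁿ → ℂⁿ and h be polynomial maps/polynomials. Suppose for every a ∈ ℂⁿ, the polynomial P(a)·f(x) − g(a) is an invariant of the loop L(a, h, F). Then g = P·f as polynomials, and f(x) − f(a) is an invariant of L(a, h, F) for every a ∈ ℂⁿ. -/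
open MvPolynomial

lemma eval_bind₁' {n : ℕ} (fF : Fin n → MvPolynomial (Fin n) ℂ)
    (a : Fin n → ℂ) (q : MvPolynomial (Fin n) ℂ) :
    eval a (bind₁ fF q) = eval (fun i => eval a (fF i)) q := by
  simpa using aeval_bind₁ (R := ℂ) a fF q

lemma eval_iterate {n : ℕ} (fF : Fin n → MvPolynomial (Fin n) ℂ)
    (l : ℕ) (a : Fin n → ℂ) (q : MvPolynomial (Fin n) ℂ) :
    eval ((fun x i => eval x (fF i))^[l] a) q = eval a ((fun p => bind₁ fF p)^[l] q) := by
  induction l generalizing a with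
  | zero => simp
  | succ l ih =>
    rw [Function.iterate_succ_apply, ih, Function.iterate_succ_apply', eval_bind₁']

/-- If `P(a)·f(x) − g(a)` is an invariant of `L(a,h,F)` for every `a ∈ ℂⁿ` and
`P ≠ 0`, then `g = P·f` and `f(x) − f(a)` is an invariant of `L(a,h,F)` for every `a`. -/
theorem invariant_specific_form {n : ℕ}
    (fF : Fin n → MvPolynomial (Fin n) ℂ)
    (f g P h : MvPolynomial (Fin n) ℂ) (hP : P ≠ 0) :
    let F : (Fin n → ℂ) → (Fin n → ℂ) := fun x i => eval x (fF i)
    (∀ a : Fin n → ℂ, ∀ l : ℕ,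
        (∏ j ∈ Finset.range l, eval (F^[j] a) h) *
          (eval a P * eval (F^[l] a) f - eval a g) = 0) →
      g = P * f ∧
      ∀ a : Fin n → ℂ, ∀ l : ℕ,
        (∏ j ∈ Finset.range l, eval (F^[j] a) h) *
          (eval (F^[l] a) f - eval a f) = 0 := by
  intro F hyp
  have hg : g = P * f := by
    apply MvPolynomial.funext
    intro a
    have := hyp a 0
    simp at this
    simp only [eval_mul]
    linear_combination -this
  refine ⟨hg, ?_⟩
  set Φ : MvPolynomial (Fin n) ℂ → MvPolynomial (Fin n) ℂ := fun p => bind₁ fF p with hΦ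
  intro a l
  -- Define the polynomial Q_l
  set Q : MvPolynomial (Fin n) ℂ :=
    (∏ j ∈ Finset.range l, Φ^[j] h) * (Φ^[l] f - f) with hQ
  have hPQ : P * Q = 0 := by
    apply MvPolynomial.funext
    intro b
    have hb := hyp b l
    rw [hg] at hb
    have heq : ∀ j, eval (F^[j] b) h = eval b (Φ^[j] h) := fun j => eval_iterate fF j b h
    have heqf : eval (F^[l] b) f = eval b (Φ^[l] f) := eval_iterate fF l b f
    simp only [eval_mul, map_zero, hQ, map_sub, map_prod]
    simp only [eval_mul, map_sub] at hb
    rw [← heqf]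
    simp only [← heq]
    ring_nf
    ring_nf at hb
    linear_combination hb
  have hQ0 : Q = 0 := by
    rcases mul_eq_zero.mp hPQ with h1 | h1
    · exact absurd h1 hP
    · exact h1
  have := congrArg (eval a) hQ0
  simp only [hQ, map_mul, map_sub, map_prod, map_zero] at this
  have heq : ∀ j, eval (F^[j] a) h = eval a (Φ^[j] h) := fun j => eval_iterate fF j a h
  have heqf : eval (F^[l] a) f = eval a (Φ^[l] f) := eval_iterate fF l a f
  rw [heqf]
  simp only [heq]
  exact this
end

section
/- Let F : ℂⁿ → ℂⁿ be a polynomial map, h ∈ ℂ[x₁,…,xₙ] nonzero, and f ∈ ℂ[x₁,…,xₙ]. Then f(x) − f(a) is a polynomial invariant of the loop L(a, h, F) for every initial value a ∈ ℂⁿ if and only if f ∘ F = f as polynomials. -/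
open MvPolynomial

/-- For `h ≠ 0`, the polynomial `f(x) − f(a)` is an invariant of `L(a,h,F)` for
every initial value `a ∈ ℂⁿ` iff `f ∘ F = f` as polynomials. -/
theorem general_invariant_iff_fixed {n : ℕ}
    (fF : Fin n → MvPolynomial (Fin n) ℂ)
    (f h : MvPolynomial (Fin n) ℂ) (hh : h ≠ 0) :
    let F : (Fin n → ℂ) → (Fin n → ℂ) := fun x i => eval x (fF i)
    (∀ a : Fin n → ℂ, ∀ l : ℕ,
        (∏ j ∈ Finset.range l, eval (F^[j] a) h) *
          (eval (F^[l] a) f - eval a f) = 0)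
      ↔ bind₁ fF f = f := by
  intro F
  have key : ∀ (g : MvPolynomial (Fin n) ℂ) (a : Fin n → ℂ),
      eval (F a) g = eval a (bind₁ fF g) := by
    intro g a
    have h1 : eval (F a) g = aeval (F a) g := by
      rw [← coe_aeval_eq_eval]; rfl
    have h2 : eval a (bind₁ fF g) = aeval a (bind₁ fF g) := by
      rw [← coe_aeval_eq_eval]; rfl
    rw [h1, h2, aeval_bind₁]
    congr 1
  constructor
  · intro H
    have hmul : h * (bind₁ fF f - f) = 0 := by
      apply MvPolynomial.funext
      intro c
      have hc := H c 1
      simp only [Finset.range_one, Finset.prod_singleton, Function.iterate_zero,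
        Function.iterate_one, id] at hc
      rw [key f c] at hc
      simpa using hc
    rcases mul_eq_zero.mp hmul with h0 | h0
    · exact absurd h0 hh
    · exact sub_eq_zero.mp h0
  · intro hfix a l
    have : eval (F^[l] a) f = eval a f := by
      induction l with
      | zero => simp
      | succ k ih =>
        rw [Function.iterate_succ_apply', key, hfix, ih]
    rw [this]
    ring
end

section
/- Let F₁, …, F_k : ℂⁿ → ℂⁿ be polynomial maps and f ∈ ℂ[x₁,…,xₙ], with h ∈ ℂ[x₁,…,xₙ] nonzero. Then f(x) − f(a) is a polynomial invariant of the nondeterministic branching loop L(a, h, (F₁,…,F_k)) for every a ∈ ℂⁿ if and only if f ∘ F_i = f for every i ∈ {1,…,k}. -/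
open MvPolynomial

/-- For a nondeterministic branching loop with branch maps `F₁,…,F_k` and
nonzero guard `h`, `f(x) − f(a)` is a polynomial invariant for every `a ∈ ℂⁿ`
iff `f ∘ F_i = f` for every branch `i`. -/
theorem branching_general_invariant_iff_fixed {n k : ℕ}
    (fF : Fin k → Fin n → MvPolynomial (Fin n) ℂ)
    (f h : MvPolynomial (Fin n) ℂ) (hh : h ≠ 0) :
    let F : Fin k → (Fin n → ℂ) → (Fin n → ℂ) := fun i x j => eval x (fF i j)
    let app : List (Fin k) → (Fin n → ℂ) → (Fin n → ℂ) :=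
      fun w a => w.foldl (fun y i => F i y) a
    (∀ a : Fin n → ℂ, ∀ w : List (Fin k),
        (∏ j ∈ Finset.range w.length, eval (app (w.take j) a) h) *
          (eval (app w a) f - eval a f) = 0)
      ↔ ∀ i : Fin k, bind₁ (fF i) f = f := by
  intro F app
  have key : ∀ (i : Fin k) (x : Fin n → ℂ), eval (F i x) f = eval x (bind₁ (fF i) f) := by
    intro i x
    have := eval₂Hom_bind₁ (RingHom.id ℂ) x (fF i) f
    simpa only [eval, F] using this.symm
  constructor
  · intro H i
    apply sub_eq_zero.mp
    by_contra hne
    have hmul : h * (bind₁ (fF i) f - f) ≠ 0 := mul_ne_zero hh hne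
    apply hmul
    apply MvPolynomial.funext
    intro x
    have := H x [i]
    simp [app, F] at this ⊢
    rw [← key i x]
    simpa [mul_sub] using this
  · intro H a w
    have : eval (app w a) f = eval a f := by
      induction w generalizing a with
      | nil => rfl
      | cons i t ih =>
        have : app (i :: t) a = app t (F i a) := rfl
        rw [this, ih (F i a), key i a, H i]
    rw [this, sub_self, mul_zero]
end

section
/- Let F : ℂⁿ → ℂⁿ be a polynomial map and f, h ∈ ℂ[x₁,…,xₙ] with h ≠ 0. Define F₁(x, y, z) = (F(x), y, z·h(x)) on ℂ^{n+2} and X = V(z·(f(x) − y)) ⊆ ℂ^{n+2}. If the invariant set S_{(F₁, X)} equals X, then f(x) − f(a) is a polynomial invariant of L(a, h, F) for every a ∈ ℂⁿ. -/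
open MvPolynomial

/-- If the invariant set of `(F₁, X)` with `F₁(x,y,z) = (F x, y, z·h(x))` and
`X = V(z·(f(x) − y))` equals `X`, then `f(x) − f(a)` is a polynomial invariant of
`L(a, h, F)` for every initial value `a ∈ ℂⁿ`. -/
theorem general_invariant_of_invariant_set_eq {n : ℕ}
    (fF : Fin n → MvPolynomial (Fin n) ℂ)
    (f h : MvPolynomial (Fin n) ℂ) (hh : h ≠ 0) :
    let F : (Fin n → ℂ) → (Fin n → ℂ) := fun x i => eval x (fF i)
    let F₁ : (Fin n → ℂ) × ℂ × ℂ → (Fin n → ℂ) × ℂ × ℂ :=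
      fun p => (F p.1, p.2.1, p.2.2 * eval p.1 h)
    let X : Set ((Fin n → ℂ) × ℂ × ℂ) := {p | p.2.2 * (eval p.1 f - p.2.1) = 0}
    {p ∈ X | ∀ m : ℕ, F₁^[m] p ∈ X} = X →
      ∀ a : Fin n → ℂ, ∀ l : ℕ,
        (∏ j ∈ Finset.range l, eval (F^[j] a) h) *
          (eval (F^[l] a) f - eval a f) = 0 := by
  intro F F₁ X hSet a l
  have key : ∀ m : ℕ, ∀ y z, F₁^[m] (a, y, z) =
      (F^[m] a, y, z * ∏ j ∈ Finset.range m, eval (F^[j] a) h) := by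
    intro m
    induction m with
    | zero => simp
    | succ m ih =>
      intro y z
      rw [Function.iterate_succ_apply', Function.iterate_succ_apply', ih]
      simp only [Finset.prod_range_succ, Prod.mk.injEq, F₁]
      exact ⟨trivial, trivial, by ring⟩
  have hpX : (a, eval a f, (1:ℂ)) ∈ X := by simp [X]
  have := hSet ▸ hpX
  have hm := this.2 l
  rw [key l (eval a f) 1] at hm
  have := hm
  simp only [X, Set.mem_setOf_eq, mul_one, mul_eq_zero] at this
  rcases this with (h1 | h1) | h2
  · exact absurd h1 one_ne_zero
  · rw [h1, zero_mul]
  · rw [h2, mul_zero]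
end

section
/- Conversely: let F : ℂⁿ → ℂⁿ be a polynomial map and f, h ∈ ℂ[x₁,…,xₙ]. Define F₁(x,y,z) = (F(x), y, z·h(x)) and X = V(z·(f(x) − y)) ⊆ ℂ^{n+2}. If f ∘ F = f, then X ∩ F₁⁻¹(X) = X, and consequently S_{(F₁,X)} = X. -/
open MvPolynomial

/-- If `f ∘ F = f`, then for `F₁(x,y,z) = (F x, y, z·h(x))` and
`X = V(z·(f(x) − y))` we have `X ∩ F₁⁻¹(X) = X`, and consequently the invariant
set of `(F₁, X)` equals `X`. -/
theorem invariant_set_eq_of_fixed {n : ℕ}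
    (fF : Fin n → MvPolynomial (Fin n) ℂ)
    (f h : MvPolynomial (Fin n) ℂ) :
    let F : (Fin n → ℂ) → (Fin n → ℂ) := fun x i => eval x (fF i)
    let F₁ : (Fin n → ℂ) × ℂ × ℂ → (Fin n → ℂ) × ℂ × ℂ :=
      fun p => (F p.1, p.2.1, p.2.2 * eval p.1 h)
    let X : Set ((Fin n → ℂ) × ℂ × ℂ) := {p | p.2.2 * (eval p.1 f - p.2.1) = 0}
    bind₁ fF f = f →
      X ∩ F₁ ⁻¹' X = X ∧ {p ∈ X | ∀ m : ℕ, F₁^[m] p ∈ X} = X := by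
  intro F F₁ X hf
  have key : ∀ p ∈ X, F₁ p ∈ X := by
    intro p hp
    simp only [X, Set.mem_setOf_eq] at hp ⊢
    have : eval (F p.1) f = eval p.1 f := by
      have := congrArg (eval p.1) hf
      rwa [show eval p.1 (bind₁ fF f) = eval (F p.1) f by
        simp only [eval, eval₂Hom_bind₁]; rfl] at this
    show p.2.2 * eval p.1 h * (eval (F p.1) f - p.2.1) = 0
    rw [this, mul_comm p.2.2, mul_assoc, hp, mul_zero]
  have iter : ∀ p ∈ X, ∀ m : ℕ, F₁^[m] p ∈ X := by
    intro p hp m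
    induction m with
    | zero => simpa
    | succ k ih => rw [Function.iterate_succ_apply']; exact key _ ih
  constructor
  · ext p
    simp only [Set.mem_inter_iff, Set.mem_preimage]
    exact ⟨fun ⟨a, _⟩ => a, fun hp => ⟨hp, key p hp⟩⟩
  · ext p
    simp only [Set.mem_setOf_eq]
    exact ⟨fun ⟨a, _⟩ => a, fun hp => ⟨hp, iter p hp⟩⟩
end
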